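/- For integers n ≥ 2k² and k ≥ 2, the total mutual-visibility number of the Kneser graph KG(n,k) equals C(n,k) − 2k. -/

import Mathlib

/-- Two vertices `u` and `v` are `X`-visible if some shortest `u,v`-path has
no internal vertex in `X`. -/
def XVisible {V : Type*} (G : SimpleGraph V) (X : Set V) (u v : V) : Prop :=
  ∃ p : G.Walk u v, p.length = G.dist u v ∧
    ∀ w ∈ p.support, w ∈ X → w = u ∨ w = v

/-- `X` is a total mutual-visibility set if every pair of vertices is `X`-visible. -/
def IsTotalMVSet {V : Type*} (G : SimpleGraph V) (X : Set V) : Prop :=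
  ∀ u v : V, XVisible G X u v

/-- `X` is a mutual-visibility set if every pair of vertices of `X` is `X`-visible. -/
def IsMVSet {V : Type*} (G : SimpleGraph V) (X : Set V) : Prop :=
  ∀ u ∈ X, ∀ v ∈ X, XVisible G X u v

/-- The total mutual-visibility number of a graph. -/
noncomputable def totalMVNumber {V : Type*} [Fintype V] (G : SimpleGraph V) : ℕ :=
  sSup {m | ∃ X : Finset V, IsTotalMVSet G ↑X ∧ X.card = m}

/-- The mutual-visibility number of a graph. -/
noncomputable def mvNumber {V : Type*} [Fintype V] (G : SimpleGraph V) : ℕ :=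
  sSup {m | ∃ X : Finset V, IsMVSet G ↑X ∧ X.card = m}

/-- The Kneser graph `KG(n,k)`: vertices are the `k`-subsets of `[n]`,
adjacent iff disjoint. -/
def KneserGraph (n k : ℕ) : SimpleGraph {A : Finset (Fin n) // A.card = k} where
  Adj A B := A ≠ B ∧ Disjoint A.1 B.1
  symm := ⟨fun A B h => ⟨h.1.symm, h.2.symm⟩⟩
  loopless := ⟨fun A h => h.1 rfl⟩

/-!
For `n ≥ 3k - 1`, two distinct intersecting `k`-sets `u, v` are at distance two in `KG(n,k)` and
their common neighbours are the `k`-sets disjoint from `u ∪ v`; so `X` is a total mutual-visibility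
set exactly when every such pair has a common neighbour outside `X`.

Lower bound: let `X` be the complement of `2k` pairwise disjoint `k`-sets, which fit since
`n ≥ 2k²`. Two intersecting `k`-sets cover fewer than `2k` points, so one of the removed sets avoids
both of them and is a common neighbour outside `X`.

Upper bound: if fewer than `2k` vertices lie outside `X`, pick a point in each of them. These
points lie in a set `s` of size `2k - 1`, which is the union of two distinct `k`-sets `u, v`.
Every common neighbour of `u` and `v` avoids `s`, hence misses all picked points and lies in `X`.
-/

open Finset SimpleGraph Function

section Visibility

variable {V : Type*} {G : SimpleGraph V} {X : Set V} {u v : V}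

lemma xVisible_refl (G : SimpleGraph V) (X : Set V) (u : V) : XVisible G X u u :=
  ⟨.nil, by simp, by simp⟩

lemma xVisible_of_adj (h : G.Adj u v) : XVisible G X u v :=
  ⟨h.toWalk, by simp [dist_eq_one_iff_adj.mpr h], by simp⟩

lemma xVisible_iff_of_edist_eq_two (h : G.edist u v = 2) :
    XVisible G X u v ↔ ∃ w ∈ G.commonNeighbors u v, w ∉ X := by
  have hdist : G.dist u v = 2 := by simp [SimpleGraph.dist, h]
  constructor
  · rintro ⟨p, hp, hsupp⟩
    rw [hdist] at hp
    match p, hp with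
    | .cons huw (.cons hwv .nil), _ =>
      refine ⟨_, G.mem_commonNeighbors.mpr ⟨huw, hwv.symm⟩, fun hwX => ?_⟩
      rcases hsupp _ (by simp) hwX with rfl | rfl
      exacts [huw.ne rfl, hwv.ne rfl]
  · rintro ⟨w, hw, hwX⟩
    rw [G.mem_commonNeighbors] at hw
    refine ⟨.cons hw.1 (.cons hw.2.symm .nil), by simp [hdist], ?_⟩
    simp only [Walk.support_cons, Walk.support_nil, List.mem_cons, List.not_mem_nil, or_false]
    rintro x (rfl | rfl | rfl) hx
    exacts [.inl rfl, absurd hx hwX, .inr rfl]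

lemma IsTotalMVSet.of_forall_exists_commonNeighbors
    (h : ∀ u v, u ≠ v → ¬G.Adj u v → ∃ w ∈ G.commonNeighbors u v, w ∉ X) :
    IsTotalMVSet G X := by
  intro u v
  by_cases huv : u = v
  · exact huv ▸ xVisible_refl G X u
  by_cases hadj : G.Adj u v
  · exact xVisible_of_adj hadj
  obtain ⟨w, hw, hwX⟩ := h u v huv hadj
  exact (xVisible_iff_of_edist_eq_two (edist_eq_two_iff.mpr ⟨huv, hadj, ⟨w, hw⟩⟩)).mpr ⟨w, hw, hwX⟩

lemma IsTotalMVSet.exists_mem_commonNeighbors_notMem (hX : IsTotalMVSet G X) (huv : u ≠ v)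
    (hadj : ¬G.Adj u v) (hcommon : (G.commonNeighbors u v).Nonempty) :
    ∃ w ∈ G.commonNeighbors u v, w ∉ X :=
  (xVisible_iff_of_edist_eq_two (edist_eq_two_iff.mpr ⟨huv, hadj, hcommon⟩)).mp (hX u v)

end Visibility

namespace Finset

variable {α ι : Type*}

lemma exists_pairwise_disjoint_card_eq [Fintype α] {m k : ℕ} (h : m * k ≤ Fintype.card α) :
    ∃ f : Fin m → Finset α, (∀ i, #(f i) = k) ∧ Pairwise (Disjoint on f) := by
  let e : Fin m × Fin k ↪ α :=
    (finProdFinEquiv.toEmbedding.trans (Fin.castLEEmb h)).trans (Fintype.equivFin α).symm.toEmbedding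
  refine ⟨fun i => ({i} ×ˢ univ).map e, fun i => by simp, fun i j hij => ?_⟩
  exact (disjoint_map e).mpr (disjoint_product.mpr (.inl (disjoint_singleton.mpr hij)))

lemma injective_of_pairwise_disjoint {f : ι → Finset α} (hf : Pairwise (Disjoint on f))
    (hne : ∀ i, (f i).Nonempty) : Injective f := by
  intro i j hij
  by_contra hij'
  have hii : Disjoint (f i) (f j) := hf hij'
  rw [← hij] at hii
  exact (hne i).ne_empty (disjoint_self_iff_empty _ |>.mp hii)

lemma exists_disjoint_of_card_lt [Fintype ι] {f : ι → Finset α} (hf : Pairwise (Disjoint on f))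
    {s : Finset α} (hs : #s < Fintype.card ι) : ∃ i, Disjoint (f i) s := by
  by_contra! h
  choose g hg using fun i => not_disjoint_iff.mp (h i)
  obtain ⟨i, -, j, -, hij, hg_eq⟩ :=
    exists_ne_map_eq_of_card_lt_of_maps_to (s := univ) (by simpa using hs) fun i _ => (hg i).2
  exact disjoint_left.mp (hf hij) (hg i).1 (hg_eq ▸ (hg j).1)

lemma exists_card_le_forall_not_disjoint [DecidableEq α] {β : Type*} (F : Finset β)
    (f : β → Finset α) (hf : ∀ b ∈ F, (f b).Nonempty) :
    ∃ t : Finset α, #t ≤ #F ∧ ∀ b ∈ F, ¬Disjoint (f b) t := by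
  choose g hg using hf
  refine ⟨F.attach.image fun b => g b.1 b.2, card_image_le.trans (card_attach).le, fun b hb => ?_⟩
  exact not_disjoint_iff.mpr ⟨g b hb, hg b hb, mem_image.mpr ⟨⟨b, hb⟩, mem_attach _ _, rfl⟩⟩

lemma exists_card_eq_union_eq [DecidableEq α] {k : ℕ} {s : Finset α} (h₁ : k ≤ #s)
    (h₂ : #s ≤ 2 * k) : ∃ a b : Finset α, #a = k ∧ #b = k ∧ a ∪ b = s := by
  obtain ⟨a, has, ha⟩ := exists_subset_card_eq h₁
  obtain ⟨b, hb₁, hb₂, hb⟩ := exists_subsuperset_card_eq sdiff_subset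
    (by rw [card_sdiff_of_subset has]; omega) h₁
  refine ⟨a, b, ha, hb, subset_antisymm (union_subset has hb₂) fun x hx => ?_⟩
  by_cases hxa : x ∈ a
  · exact mem_union_left _ hxa
  · exact mem_union_right _ (hb₁ (mem_sdiff.mpr ⟨hx, hxa⟩))

end Finset

namespace KneserGraph

variable {n k : ℕ}

lemma adj_iff (hk : 0 < k) {u v : {A : Finset (Fin n) // A.card = k}} :
    (KneserGraph n k).Adj u v ↔ Disjoint u.1 v.1 := by
  refine ⟨And.right, fun h => ⟨?_, h⟩⟩
  rintro rfl
  have := u.2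
  rw [(disjoint_self_iff_empty _).mp h, card_empty] at this
  omega

lemma mem_commonNeighbors_iff (hk : 0 < k) {u v w : {A : Finset (Fin n) // A.card = k}} :
    w ∈ (KneserGraph n k).commonNeighbors u v ↔ Disjoint w.1 (u.1 ∪ v.1) := by
  rw [mem_commonNeighbors, adj_iff hk, adj_iff hk, disjoint_union_right, disjoint_comm (a := u.1),
    disjoint_comm (a := v.1)]

lemma card_union_lt_of_not_adj (hk : 0 < k) {u v : {A : Finset (Fin n) // A.card = k}}
    (hadj : ¬(KneserGraph n k).Adj u v) : #(u.1 ∪ v.1) < 2 * k := by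
  have hle := card_union_le u.1 v.1
  have hne : #(u.1 ∪ v.1) ≠ #u.1 + #v.1 := mt card_union_eq_card_add_card.mp (by rwa [← adj_iff hk])
  rw [u.2, v.2] at hle hne
  omega

lemma isTotalMVSet_compl_range {ι : Type*} [Fintype ι] (hk : 0 < k)
    (f : ι → {A : Finset (Fin n) // A.card = k}) (hf : Pairwise (Disjoint on fun i => (f i).1))
    (hι : 2 * k ≤ Fintype.card ι) : IsTotalMVSet (KneserGraph n k) (Set.range f)ᶜ := by
  refine IsTotalMVSet.of_forall_exists_commonNeighbors fun u v _ hadj => ?_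
  obtain ⟨i, hi⟩ := exists_disjoint_of_card_lt hf ((card_union_lt_of_not_adj hk hadj).trans_le hι)
  exact ⟨f i, (mem_commonNeighbors_iff hk).mpr hi, by simp⟩

lemma exists_not_adj_commonNeighbors_disjoint (hk : 2 ≤ k) (hn : 3 * k - 1 ≤ n)
    {s : Finset (Fin n)} (hs : #s = 2 * k - 1) :
    ∃ u v : {A : Finset (Fin n) // A.card = k}, u ≠ v ∧ ¬(KneserGraph n k).Adj u v ∧
      ((KneserGraph n k).commonNeighbors u v).Nonempty ∧
      ∀ w ∈ (KneserGraph n k).commonNeighbors u v, Disjoint w.1 s := by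
  obtain ⟨a, b, ha, hb, hab⟩ := exists_card_eq_union_eq (s := s) (k := k) (by omega) (by omega)
  obtain ⟨c, hcs, hc⟩ := exists_subset_card_eq (s := sᶜ) (n := k) (by simp [card_compl]; omega)
  have hdisj_c : Disjoint c s := disjoint_left.mpr fun x hx => mem_compl.mp (hcs hx)
  have hk0 : 0 < k := by omega
  refine ⟨⟨a, ha⟩, ⟨b, hb⟩, fun h => ?_, fun h => ?_, ⟨⟨c, hc⟩, ?_⟩, fun w hw => ?_⟩
  · rw [show b = a from congrArg Subtype.val h.symm, union_self] at hab
    rw [hab] at ha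
    omega
  · have := card_union_eq_card_add_card.mpr ((adj_iff hk0).mp h)
    simp only [hab] at this
    omega
  · exact (mem_commonNeighbors_iff hk0).mpr (hab ▸ hdisj_c)
  · exact hab ▸ (mem_commonNeighbors_iff hk0).mp hw

lemma two_mul_le_card_compl_of_isTotalMVSet (hk : 2 ≤ k) (hn : 3 * k - 1 ≤ n)
    {X : Finset {A : Finset (Fin n) // A.card = k}} (hX : IsTotalMVSet (KneserGraph n k) ↑X) :
    2 * k ≤ #Xᶜ := by
  by_contra! hXc
  obtain ⟨t, ht, hmeet⟩ := exists_card_le_forall_not_disjoint Xᶜ Subtype.val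
    fun w _ => card_pos.mp (by rw [w.2]; omega)
  obtain ⟨s, hts, hs⟩ := exists_superset_card_eq (n := 2 * k - 1) (s := t) (by omega)
    (by simp only [Fintype.card_fin]; omega)
  obtain ⟨u, v, huv, hadj, hcommon, hdisj⟩ := exists_not_adj_commonNeighbors_disjoint hk hn hs
  obtain ⟨w, hw, hwX⟩ := hX.exists_mem_commonNeighbors_notMem huv hadj hcommon
  exact hmeet w (by simpa using hwX) ((hdisj w hw).mono_right hts)

end KneserGraph

/-- For `n ≥ 2k²` and `k ≥ 2`, the total mutual-visibility number of
`KG(n,k)` equals `C(n,k) - 2k`. -/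
theorem kneser_totalMVNumber_large_n (n k : ℕ) (hk : 2 ≤ k) (hn : 2 * k ^ 2 ≤ n) :
    totalMVNumber (KneserGraph n k) = n.choose k - 2 * k := by
  classical
  obtain ⟨f, hf_card, hf_disj⟩ :=
    exists_pairwise_disjoint_card_eq (α := Fin n) (m := 2 * k) (k := k) (by simp; nlinarith)
  have hf_inj : Injective f :=
    injective_of_pairwise_disjoint hf_disj fun i => card_pos.mp (by rw [hf_card]; omega)
  let blocks (i : Fin (2 * k)) : {A : Finset (Fin n) // A.card = k} := ⟨f i, hf_card i⟩
  have hblocks : Injective blocks := Injective.of_comp (f := Subtype.val) hf_inj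
  have h3k : 3 * k - 1 ≤ n := (Nat.sub_le _ _).trans (by nlinarith)
  have hcard : Fintype.card {A : Finset (Fin n) // A.card = k} = n.choose k := by
    simp [Fintype.card_finset_len]
  refine IsGreatest.csSup_eq ⟨⟨(univ.image blocks)ᶜ, ?_, ?_⟩, ?_⟩
  · simpa using KneserGraph.isTotalMVSet_compl_range (by omega) blocks hf_disj (by simp)
  · rw [card_compl, card_image_of_injective _ hblocks, card_univ, Fintype.card_fin, hcard]
  · rintro _ ⟨X, hX, rfl⟩
    have hXc := KneserGraph.two_mul_le_card_compl_of_isTotalMVSet hk h3k hX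
    rw [card_compl, hcard] at hXc
    omega
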